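/- Let (T,η,μ) be a monad and F an endofunctor on a category C, and let λ: FT → TF be a Kleisli distributive law, i.e. a natural transformation with λ∘Fη = ηF and λ∘Fμ = μF∘Tλ∘λT. Define λⁿ: FⁿT → TFⁿ by λ⁰ = id and λ^{n+1} = λⁿF ∘ Fⁿλ. Then for every n, the diagram TFTTFⁿ ⇉ TFTFⁿ → TF^{n+1}, with parallel maps TFμFⁿ and μFTFⁿ∘TλTFⁿ and cocone μF^{n+1}∘TλFⁿ, is objectwise a split coequalizer: with s = TFηFⁿ: TF^{n+1} → TFTFⁿ and t = TFTηFⁿ: TFTFⁿ → TFTTFⁿ the four equations (μF^{n+1}∘TλFⁿ)∘(TFμFⁿ) = (μF^{n+1}∘TλFⁿ)∘(μFTFⁿ∘TλTFⁿ), (μF^{n+1}∘TλFⁿ)∘s = id, (TFμFⁿ)∘t = id, and (μFTFⁿ∘TλTFⁿ)∘t = s∘(μF^{n+1}∘TλFⁿ) hold. Consequently, when C = Set, the graded monad with M_n = TFⁿ, unit η and multiplications μ^{nk} = μF^{n+k}∘TλⁿFᵏ is depth-1. -/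

import Mathlib

open CategoryTheory CategoryTheory.Limits

universe v u

variable {C : Type u} [Category.{v} C]

/-- Iterated application of an endofunctor: `pow F n = Fⁿ` (with `F^{n+1} = Fⁿ ∘ F`). -/
def pow (F : C ⥤ C) : ℕ → C ⥤ C
  | 0 => 𝟭 C
  | n + 1 => F ⋙ pow F n

/-- The iterated Kleisli distributive law `λⁿ : FⁿT → TFⁿ`, with `λ⁰ = id` and
`λ^{n+1} = λⁿF ∘ Fⁿλ`. -/
def klLamPow (T : CategoryTheory.Monad C) (F : C ⥤ C)
    (l : ∀ X : C, F.obj (T.obj X) ⟶ T.obj (F.obj X)) :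
    ∀ (n : ℕ) (X : C), (pow F n).obj (T.obj X) ⟶ T.obj ((pow F n).obj X)
  | 0, X => 𝟙 (T.obj X)
  | n + 1, X => (pow F n).map (l X) ≫ klLamPow T F l n (F.obj X)

/-- `μ` as a morphism of free algebras `free(TZ) ⟶ free(Z)`. -/
def muHom (T : CategoryTheory.Monad C) (Z : C) :
    (Monad.free T).obj (T.obj Z) ⟶ (Monad.free T).obj Z where
  f := T.μ.app Z
  h := T.assoc Z

/-!
The unit of `T` splits the fork. By the unit law of `λ`, `s = TFη` is a section of the cocone
`μF ∘ Tλ`; by the unit law of `T`, `t = TFTη` is a section of `TFμ`; naturality of `μF ∘ Tλ`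
gives `t ≫ (μF ∘ TλT) = (μF ∘ Tλ) ≫ s`; and the multiplication law of `λ` together with
associativity of `μ` makes the cocone coequalize the pair. A split coequalizer is absolute, and
the forgetful functor from `T`-algebras, being monadic, creates coequalizers of pairs it splits;
so the fork of free algebras is a coequalizer as well.
-/

namespace CategoryTheory

def Limits.Cofork.IsColimit.ofSymm {X Y Z : C} {f g : X ⟶ Y} {π : Y ⟶ Z} {w : f ≫ π = g ≫ π}
    (h : IsColimit (Cofork.ofπ π w.symm)) : IsColimit (Cofork.ofπ π w) :=
  Cofork.IsColimit.mk' _ fun s =>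
    ⟨Cofork.IsColimit.desc h s.π s.condition.symm, Cofork.IsColimit.π_desc' h _ _,
      fun hm => Cofork.IsColimit.hom_ext h (hm.trans (Cofork.IsColimit.π_desc' h _ _).symm)⟩

lemma Functor.map_map_eta_comp_map_mu {D : Type*} [Category D] (G : C ⥤ D) (T : Monad C)
    (Y : C) : G.map (T.map (T.η.app Y)) ≫ G.map (T.μ.app Y) = 𝟙 _ := by
  rw [← G.map_comp, T.right_unit, G.map_id]

namespace Monad

variable {T : Monad C} {A B Z : T.Algebra} {f g : A ⟶ B} {π : B ⟶ Z}

noncomputable def isColimitOfIsSplitCoequalizer (w : f ≫ π = g ≫ π)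
    (hs : IsSplitCoequalizer f.f g.f π.f) : IsColimit (Cofork.ofπ π w) :=
  have : (forget T).IsSplitPair f g := ⟨_, _, ⟨hs⟩⟩
  have := createsGSplitCoequalizersOfMonadic (forget T) f g
  isColimitOfReflects (forget T) ((isColimitMapCoconeCoforkEquiv _ w).symm hs.isCoequalizer)

end Monad

end CategoryTheory

section KleisliLaw

variable (T : Monad C) (F : C ⥤ C) (l : ∀ X : C, F.obj (T.obj X) ⟶ T.obj (F.obj X))

/-- The multiplication `μ¹⁰ = μF ∘ Tλ : TFT ⟶ TF` of the graded monad `TFⁿ`. -/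
def kleisliLift (Y : C) : T.obj (F.obj (T.obj Y)) ⟶ T.obj (F.obj Y) :=
  T.map (l Y) ≫ T.μ.app (F.obj Y)

variable {T F l}

lemma kleisliLift_naturality
    (l_nat : ∀ {X Y : C} (f : X ⟶ Y), F.map (T.map f) ≫ l Y = l X ≫ T.map (F.map f))
    {Y Y' : C} (f : Y ⟶ Y') :
    T.map (F.map (T.map f)) ≫ kleisliLift T F l Y' = kleisliLift T F l Y ≫ T.map (F.map f) := by
  rw [kleisliLift, kleisliLift, ← T.map_comp_assoc, l_nat, T.map_comp_assoc,
    T.mu_naturality, Category.assoc]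

lemma map_map_eta_comp_kleisliLift
    (l_unit : ∀ X : C, F.map (T.η.app X) ≫ l X = T.η.app (F.obj X)) (Y : C) :
    T.map (F.map (T.η.app Y)) ≫ kleisliLift T F l Y = 𝟙 _ := by
  rw [kleisliLift, ← T.map_comp_assoc, l_unit, T.right_unit]
  rfl

lemma map_map_mu_comp_kleisliLift
    (l_mult : ∀ X : C,
      F.map (T.μ.app X) ≫ l X = l (T.obj X) ≫ T.map (l X) ≫ T.μ.app (F.obj X)) (Y : C) :
    T.map (F.map (T.μ.app Y)) ≫ kleisliLift T F l Y
      = kleisliLift T F l (T.obj Y) ≫ kleisliLift T F l Y := by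
  rw [kleisliLift, kleisliLift, ← T.map_comp_assoc, l_mult]
  simp only [Functor.map_comp, Category.assoc]
  rw [T.assoc, T.mu_naturality_assoc]

def kleisliLiftIsSplitCoequalizer
    (l_nat : ∀ {X Y : C} (f : X ⟶ Y), F.map (T.map f) ≫ l Y = l X ≫ T.map (F.map f))
    (l_unit : ∀ X : C, F.map (T.η.app X) ≫ l X = T.η.app (F.obj X))
    (l_mult : ∀ X : C,
      F.map (T.μ.app X) ≫ l X = l (T.obj X) ≫ T.map (l X) ≫ T.μ.app (F.obj X)) (Y : C) :
    IsSplitCoequalizer (kleisliLift T F l (T.obj Y)) (T.map (F.map (T.μ.app Y)))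
      (kleisliLift T F l Y) where
  rightSection := T.map (F.map (T.η.app Y))
  leftSection := T.map (F.map (T.map (T.η.app Y)))
  condition := (map_map_mu_comp_kleisliLift l_mult Y).symm
  rightSection_π := map_map_eta_comp_kleisliLift l_unit Y
  leftSection_bottom := (F ⋙ T.toFunctor).map_map_eta_comp_map_mu T Y
  leftSection_top := kleisliLift_naturality l_nat (T.η.app Y)

end KleisliLaw

/-- Given a monad `T`, an endofunctor `F` and a Kleisli distributive law `λ : FT → TF`,
for every `n` the diagram `TFTTFⁿ ⇉ TFTFⁿ → TF^{n+1}` (parallel maps `TFμFⁿ` and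
`μFTFⁿ ∘ TλTFⁿ`, cocone `μF^{n+1} ∘ TλFⁿ`) is objectwise a split coequalizer, with
splittings `s = TFηFⁿ` and `t = TFTηFⁿ`; consequently (the forgetful functor
creating these coequalizers) the corresponding fork of free `T`-algebras is a
coequalizer in the Eilenberg-Moore category of `T`, i.e. the graded monad
`Mₙ = TFⁿ` is depth-1. -/
theorem kleisli_law_graded_monad_depth1 (T : CategoryTheory.Monad C) (F : C ⥤ C)
    (l : ∀ X : C, F.obj (T.obj X) ⟶ T.obj (F.obj X))
    (l_nat : ∀ {X Y : C} (f : X ⟶ Y), F.map (T.map f) ≫ l Y = l X ≫ T.map (F.map f))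
    (l_unit : ∀ X : C, F.map (T.η.app X) ≫ l X = T.η.app (F.obj X))
    (l_mult : ∀ X : C,
      F.map (T.μ.app X) ≫ l X = l (T.obj X) ≫ T.map (l X) ≫ T.μ.app (F.obj X))
    (n : ℕ) (X : C) :
    ∀ Y : C, Y = (pow F n).obj X →
      -- the four split coequalizer equations, at `Y = FⁿX`
      (T.map (F.map (T.μ.app Y)) ≫ (T.map (l Y) ≫ T.μ.app (F.obj Y))
          = (T.map (l (T.obj Y)) ≫ T.μ.app (F.obj (T.obj Y)))
              ≫ (T.map (l Y) ≫ T.μ.app (F.obj Y))) ∧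
      (T.map (F.map (T.η.app Y)) ≫ (T.map (l Y) ≫ T.μ.app (F.obj Y))
          = 𝟙 (T.obj (F.obj Y))) ∧
      (T.map (F.map (T.map (T.η.app Y))) ≫ T.map (F.map (T.μ.app Y))
          = 𝟙 (T.obj (F.obj (T.obj Y)))) ∧
      (T.map (F.map (T.map (T.η.app Y)))
            ≫ (T.map (l (T.obj Y)) ≫ T.μ.app (F.obj (T.obj Y)))
          = (T.map (l Y) ≫ T.μ.app (F.obj Y)) ≫ T.map (F.map (T.η.app Y))) ∧
      -- the split coequalizer, with the above splittings
      (∃ sc : IsSplitCoequalizer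
          (T.map (l (T.obj Y)) ≫ T.μ.app (F.obj (T.obj Y)))
          (T.map (F.map (T.μ.app Y)))
          (T.map (l Y) ≫ T.μ.app (F.obj Y)),
        sc.rightSection = T.map (F.map (T.η.app Y)) ∧
        sc.leftSection = T.map (F.map (T.map (T.η.app Y)))) ∧
      -- consequently: the fork is a coequalizer in the Eilenberg-Moore category of `T`
      (∃ w : ((Monad.free T).map (F.map (T.μ.app Y)))
              ≫ ((Monad.free T).map (l Y) ≫ muHom T (F.obj Y))
            = ((Monad.free T).map (l (T.obj Y)) ≫ muHom T (F.obj (T.obj Y)))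
              ≫ ((Monad.free T).map (l Y) ≫ muHom T (F.obj Y)),
        Nonempty (IsColimit (Cofork.ofπ
          ((Monad.free T).map (l Y) ≫ muHom T (F.obj Y)) w))) := by
  intro Y _
  let sc := kleisliLiftIsSplitCoequalizer l_nat l_unit l_mult Y
  have w : (Monad.free T).map (F.map (T.μ.app Y))
        ≫ ((Monad.free T).map (l Y) ≫ muHom T (F.obj Y))
      = ((Monad.free T).map (l (T.obj Y)) ≫ muHom T (F.obj (T.obj Y)))
        ≫ ((Monad.free T).map (l Y) ≫ muHom T (F.obj Y)) :=
    Monad.Algebra.Hom.ext sc.condition.symm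
  exact ⟨sc.condition.symm, sc.rightSection_π, sc.leftSection_bottom, sc.leftSection_top,
    ⟨sc, rfl, rfl⟩, w,
    ⟨Cofork.IsColimit.ofSymm (Monad.isColimitOfIsSplitCoequalizer w.symm sc)⟩⟩
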